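/- Define an action of the planar rook monoid P_{k-1} on V^{⊗k} with respect to the basis {v_s, f v_s} by d·v_s = v_{d(s)} and d·(f v_s) = f v_{d(s)} if s ⊆ dom(d), and 0 otherwise. This action commutes with the gl(1|1)-action on V^{⊗k}: for every diagram d and every a ∈ {e, f, h₁, h₂}, d·(a·w) = a·(d·w) for all w in the basis. -/
import Mathlib


/-- A planar rook diagram on `n` vertices: a pair of equal-size subsets of `Fin n`
(the domain and range), which determines a unique order-preserving bijection. -/
structure PlanarRook (n : ℕ) where
  dom : Finset (Fin n)
  ran : Finset (Fin n)
  hcard : dom.card = ran.card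

/-- The image of an element of the domain under the unique order-preserving
bijection `dom → ran` determined by the diagram. -/
noncomputable def PlanarRook.mapElem {n : ℕ} (d : PlanarRook n) (x : Fin n)
    (hx : x ∈ d.dom) : Fin n :=
  ((d.ran.orderIsoOfFin d.hcard.symm) ((d.dom.orderIsoOfFin rfl).symm ⟨x, hx⟩) : Fin n)

/-- The image of a subset under a planar rook diagram. -/
noncomputable def PlanarRook.applySet {n : ℕ} (d : PlanarRook n)
    (s : Finset (Fin n)) : Finset (Fin n) :=
  (d.dom.attach.filter (fun x => x.1 ∈ s)).image (fun x => d.mapElem x.1 x.2)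

/-- The basis vector `m_s` of the module `M`. -/
noncomputable def mvec {n : ℕ} (s : Finset (Fin n)) : Finset (Fin n) → ℂ :=
  fun t => if t = s then 1 else 0

/-- The action of a planar rook diagram on the module `M` with basis `m_s`:
`d · m_s = m_{d(s)}` if `s ⊆ dom d`, else `0`, extended linearly. -/
noncomputable def rookAct {n : ℕ} (d : PlanarRook n) (f : Finset (Fin n) → ℂ) :
    Finset (Fin n) → ℂ :=
  fun t => ∑ s ∈ Finset.univ.filter (fun s => s ⊆ d.dom ∧ d.applySet s = t), f s

noncomputable section

/-- `V^{⊗k}` for the two-dimensional module `V = ℂx ⊕ ℂy`, realized as functions on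
words `w : Fin k → Bool` (`false` = `x` (even), `true` = `y` (odd)). -/
abbrev TensorV (k : ℕ) : Type := (Fin k → Bool) → ℂ

/-- The sign `(-1)^{#odd factors strictly before position i}` in the graded Leibniz rule. -/
def glSgn {k : ℕ} (w : Fin k → Bool) (i : Fin k) : ℂ :=
  (-1 : ℂ) ^ (Finset.univ.filter (fun j => j < i ∧ w j = true)).card

/-- The action of `e ∈ gl(1|1)` on `V^{⊗k}` (graded Leibniz rule, `e·y = x`, `e·x = 0`). -/
def Eop (k : ℕ) : TensorV k →ₗ[ℂ] TensorV k :=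
  LinearMap.pi fun w =>
    ∑ i ∈ Finset.univ.filter (fun i => w i = false),
      glSgn w i • LinearMap.proj (R := ℂ) (φ := fun _ => ℂ) (Function.update w i true)

/-- The action of `f ∈ gl(1|1)` on `V^{⊗k}` (graded Leibniz rule, `f·x = y`, `f·y = 0`). -/
def Fop (k : ℕ) : TensorV k →ₗ[ℂ] TensorV k :=
  LinearMap.pi fun w =>
    ∑ i ∈ Finset.univ.filter (fun i => w i = true),
      glSgn w i • LinearMap.proj (R := ℂ) (φ := fun _ => ℂ) (Function.update w i false)

/-- The action of `h₁ ∈ gl(1|1)` on `V^{⊗k}`: a word is scaled by its number of `x`'s. -/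
def H1op (k : ℕ) : TensorV k →ₗ[ℂ] TensorV k :=
  LinearMap.pi fun w =>
    ((Finset.univ.filter (fun i => w i = false)).card : ℂ) •
      LinearMap.proj (R := ℂ) (φ := fun _ => ℂ) w

/-- The action of `h₂ ∈ gl(1|1)` on `V^{⊗k}`: a word is scaled by its number of `y`'s. -/
def H2op (k : ℕ) : TensorV k →ₗ[ℂ] TensorV k :=
  LinearMap.pi fun w =>
    ((Finset.univ.filter (fun i => w i = true)).card : ℂ) •
      LinearMap.proj (R := ℂ) (φ := fun _ => ℂ) w

/-- The standard basis vector of `V^{⊗k}` indexed by the word `w`. -/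
def bv {k : ℕ} (w : Fin k → Bool) : TensorV k := fun w' => if w' = w then 1 else 0

/-- The word of `y ⊗ u_s ∈ V^{⊗(n+1)}`, where `u_s = u₁⊗⋯⊗u_n` has `u_i = x`
iff `i ∈ s`. -/
def wordOf {n : ℕ} (s : Finset (Fin n)) : Fin (n + 1) → Bool :=
  Fin.cons true (fun j => if j ∈ s then false else true)

/-- The highest weight vector `v_s = e · (y ⊗ u_s) ∈ V^{⊗(n+1)}`. -/
def vStd {n : ℕ} (s : Finset (Fin n)) : TensorV (n + 1) := Eop (n + 1) (bv (wordOf s))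

end

open Finset Function

lemma Eop_apply {k : ℕ} (φ : TensorV k) (w : Fin k → Bool) :
    Eop k φ w = ∑ i ∈ Finset.univ.filter (fun i => w i = false),
      glSgn w i * φ (Function.update w i true) := by
  simp [Eop, LinearMap.pi_apply, LinearMap.sum_apply]

lemma Fop_apply {k : ℕ} (φ : TensorV k) (w : Fin k → Bool) :
    Fop k φ w = ∑ i ∈ Finset.univ.filter (fun i => w i = true),
      glSgn w i * φ (Function.update w i false) := by
  simp [Fop, LinearMap.pi_apply, LinearMap.sum_apply]

lemma H1op_apply {k : ℕ} (φ : TensorV k) (w : Fin k → Bool) :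
    H1op k φ w = ((Finset.univ.filter (fun i => w i = false)).card : ℂ) * φ w := by
  simp [H1op]

lemma H2op_apply {k : ℕ} (φ : TensorV k) (w : Fin k → Bool) :
    H2op k φ w = ((Finset.univ.filter (fun i => w i = true)).card : ℂ) * φ w := by
  simp [H2op]

lemma glSgn_update_of_le {k : ℕ} (w : Fin k → Bool) {i j : Fin k} (h : j ≤ i) (b : Bool) :
    glSgn (Function.update w i b) j = glSgn w j := by
  unfold glSgn
  congr 2
  apply Finset.filter_congr
  intro l _
  by_cases hl : l = i
  · subst hl
    constructor <;> (rintro ⟨h1, -⟩; exact absurd (lt_of_lt_of_le h1 h) (lt_irrefl _))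
  · rw [Function.update_of_ne hl]

lemma glSgn_update_of_lt {k : ℕ} (w : Fin k → Bool) {i j : Fin k} (h : i < j) {b : Bool}
    (hb : w i ≠ b) :
    glSgn (Function.update w i b) j = - glSgn w j := by
  unfold glSgn
  have key : ∀ l, l ≠ i → (Function.update w i b l = w l) := fun l hl => Function.update_of_ne hl _ _
  cases b with
  | false =>
    have hwi : w i = true := by simpa using hb
    have hins : Finset.univ.filter (fun l => l < j ∧ w l = true)
        = insert i (Finset.univ.filter (fun l => l < j ∧ Function.update w i false l = true)) := by
      ext l
      by_cases hl : l = i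
      · subst hl; simp [h, hwi]
      · simp [hl, key l hl, Finset.mem_insert, Finset.mem_filter]
    rw [hins, Finset.card_insert_of_notMem (by simp)]
    ring
  | true =>
    have hwi : w i = false := by simpa using hb
    have hins : Finset.univ.filter (fun l => l < j ∧ Function.update w i true l = true)
        = insert i (Finset.univ.filter (fun l => l < j ∧ w l = true)) := by
      ext l
      by_cases hl : l = i
      · subst hl; simp [h]
      · simp [hl, key l hl, Finset.mem_insert, Finset.mem_filter]
    rw [hins, Finset.card_insert_of_notMem (by simp [hwi])]
    ring

lemma filter_false_update_true {k : ℕ} (w : Fin k → Bool) (i : Fin k) :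
    Finset.univ.filter (fun j => Function.update w i true j = false)
      = (Finset.univ.filter (fun j => w j = false)).erase i := by
  ext j
  by_cases hj : j = i
  · subst hj; simp
  · simp [hj, Function.update_of_ne hj]

lemma filter_true_update_true {k : ℕ} (w : Fin k → Bool) (i : Fin k) (h : w i = false) :
    Finset.univ.filter (fun j => Function.update w i true j = true)
      = insert i (Finset.univ.filter (fun j => w j = true)) := by
  ext j
  by_cases hj : j = i
  · subst hj; simp
  · simp [hj, Function.update_of_ne hj]

lemma filter_true_update_false {k : ℕ} (w : Fin k → Bool) (i : Fin k) :
    Finset.univ.filter (fun j => Function.update w i false j = true)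
      = (Finset.univ.filter (fun j => w j = true)).erase i := by
  ext j
  by_cases hj : j = i
  · subst hj; simp
  · simp [hj, Function.update_of_ne hj]

lemma filter_false_update_false {k : ℕ} (w : Fin k → Bool) (i : Fin k) (h : w i = true) :
    Finset.univ.filter (fun j => Function.update w i false j = false)
      = insert i (Finset.univ.filter (fun j => w j = false)) := by
  ext j
  by_cases hj : j = i
  · subst hj; simp
  · simp [hj, Function.update_of_ne hj]

lemma Eop_Eop {k : ℕ} (φ : TensorV k) : Eop k (Eop k φ) = 0 := by
  funext w
  rw [Eop_apply]
  set F := Finset.univ.filter (fun i => w i = false) with hF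
  have hstep : ∀ i ∈ F, glSgn w i * Eop k φ (Function.update w i true)
      = ∑ j ∈ F.erase i,
          glSgn w i * glSgn (Function.update w i true) j *
            φ (Function.update (Function.update w i true) j true) := by
    intro i hi
    rw [Eop_apply, filter_false_update_true, ← hF, Finset.mul_sum]
    exact Finset.sum_congr rfl fun j _ => by ring
  rw [Finset.sum_congr rfl hstep]
  have herase : ∀ i ∈ F, (∑ j ∈ F.erase i,
      glSgn w i * glSgn (Function.update w i true) j *
        φ (Function.update (Function.update w i true) j true))
      = ∑ j ∈ F, if j = i then 0 else
          glSgn w i * glSgn (Function.update w i true) j *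
            φ (Function.update (Function.update w i true) j true) := by
    intro i hi
    rw [Finset.sum_ite, Finset.sum_const_zero, zero_add, Finset.filter_ne']
  rw [Finset.sum_congr rfl herase, ← Finset.sum_product']
  set T : Fin k × Fin k → ℂ := fun p => if p.2 = p.1 then 0 else
      glSgn w p.1 * glSgn (Function.update w p.1 true) p.2 *
        φ (Function.update (Function.update w p.1 true) p.2 true) with hT
  show ∑ p ∈ F ×ˢ F, T p = 0
  apply Finset.sum_involution (fun p _ => p.swap)
  · intro p hp
    rcases p with ⟨i, j⟩
    simp only [Finset.mem_product, hF, Finset.mem_filter] at hp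
    by_cases hij : j = i
    · simp [hT, hij]
    · have hi : w i = false := hp.1.2
      have hj : w j = false := hp.2.2
      have hword : Function.update (Function.update w i true) j true
          = Function.update (Function.update w j true) i true :=
        (Function.update_comm hij _ _ _).symm
      simp only [hT, Prod.swap, if_neg hij, if_neg (Ne.symm hij)]
      rcases lt_trichotomy i j with h | h | h
      · rw [glSgn_update_of_lt w h (by simp [hi]),
          glSgn_update_of_le w (le_of_lt h), hword]
        ring
      · exact absurd h.symm hij
      · rw [glSgn_update_of_lt w h (by simp [hj]),
          glSgn_update_of_le w (le_of_lt h), hword]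
        ring
  · intro p hp hne
    rcases p with ⟨i, j⟩
    intro hsw
    have : j = i := (Prod.ext_iff.1 hsw).1
    simp [hT, this] at hne
  · intro p hp
    simp
  · intro p hp
    rcases p with ⟨i, j⟩
    rw [Finset.mem_product] at hp ⊢
    exact ⟨hp.2, hp.1⟩

lemma Fop_Fop {k : ℕ} (φ : TensorV k) : Fop k (Fop k φ) = 0 := by
  funext w
  rw [Fop_apply]
  set F := Finset.univ.filter (fun i => w i = true) with hF
  have hstep : ∀ i ∈ F, glSgn w i * Fop k φ (Function.update w i false)
      = ∑ j ∈ F.erase i,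
          glSgn w i * glSgn (Function.update w i false) j *
            φ (Function.update (Function.update w i false) j false) := by
    intro i hi
    rw [Fop_apply, filter_true_update_false, ← hF, Finset.mul_sum]
    exact Finset.sum_congr rfl fun j _ => by ring
  rw [Finset.sum_congr rfl hstep]
  have herase : ∀ i ∈ F, (∑ j ∈ F.erase i,
      glSgn w i * glSgn (Function.update w i false) j *
        φ (Function.update (Function.update w i false) j false))
      = ∑ j ∈ F, if j = i then 0 else
          glSgn w i * glSgn (Function.update w i false) j *
            φ (Function.update (Function.update w i false) j false) := by
    intro i hi
    rw [Finset.sum_ite, Finset.sum_const_zero, zero_add, Finset.filter_ne']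
  rw [Finset.sum_congr rfl herase, ← Finset.sum_product']
  set T : Fin k × Fin k → ℂ := fun p => if p.2 = p.1 then 0 else
      glSgn w p.1 * glSgn (Function.update w p.1 false) p.2 *
        φ (Function.update (Function.update w p.1 false) p.2 false) with hT
  show ∑ p ∈ F ×ˢ F, T p = 0
  apply Finset.sum_involution (fun p _ => p.swap)
  · intro p hp
    rcases p with ⟨i, j⟩
    simp only [Finset.mem_product, hF, Finset.mem_filter] at hp
    by_cases hij : j = i
    · simp [hT, hij]
    · have hi : w i = true := hp.1.2
      have hj : w j = true := hp.2.2
      have hword : Function.update (Function.update w i false) j false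
          = Function.update (Function.update w j false) i false :=
        (Function.update_comm hij _ _ _).symm
      simp only [hT, Prod.swap, if_neg hij, if_neg (Ne.symm hij)]
      rcases lt_trichotomy i j with h | h | h
      · rw [glSgn_update_of_lt w h (by simp [hi]),
          glSgn_update_of_le w (le_of_lt h), hword]
        ring
      · exact absurd h.symm hij
      · rw [glSgn_update_of_lt w h (by simp [hj]),
          glSgn_update_of_le w (le_of_lt h), hword]
        ring
  · intro p hp hne
    rcases p with ⟨i, j⟩
    intro hsw
    have : j = i := (Prod.ext_iff.1 hsw).1
    simp [hT, this] at hne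
  · intro p hp
    simp
  · intro p hp
    rcases p with ⟨i, j⟩
    rw [Finset.mem_product] at hp ⊢
    exact ⟨hp.2, hp.1⟩

lemma glSgn_sq {k : ℕ} (w : Fin k → Bool) (i : Fin k) : glSgn w i * glSgn w i = 1 := by
  unfold glSgn
  rw [← pow_add, ← two_mul, pow_mul]
  norm_num

lemma EF_FE {k : ℕ} (φ : TensorV k) :
    Eop k (Fop k φ) + Fop k (Eop k φ) = (k : ℂ) • φ := by
  funext w
  set F := Finset.univ.filter (fun i => w i = false) with hF
  set T := Finset.univ.filter (fun i => w i = true) with hT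
  have hEF : Eop k (Fop k φ) w = (F.card : ℂ) * φ w +
      ∑ i ∈ F, ∑ j ∈ T, glSgn w i * glSgn (Function.update w i true) j *
        φ (Function.update (Function.update w i true) j false) := by
    rw [Eop_apply, ← hF]
    have hstep : ∀ i ∈ F, glSgn w i * Fop k φ (Function.update w i true)
        = φ w + ∑ j ∈ T, glSgn w i * glSgn (Function.update w i true) j *
            φ (Function.update (Function.update w i true) j false) := by
      intro i hi
      rw [hF, Finset.mem_filter] at hi
      rw [Fop_apply, filter_true_update_true w i hi.2, ← hT,
        Finset.sum_insert (by simp [hT, hi.2]), mul_add, Finset.mul_sum]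
      congr 1
      · rw [Function.update_idem, glSgn_update_of_le w (le_refl i)]
        rw [show Function.update w i false = w by rw [← hi.2, Function.update_eq_self]]
        rw [← mul_assoc, glSgn_sq, one_mul]
      · exact Finset.sum_congr rfl fun j _ => by ring
    rw [Finset.sum_congr rfl hstep, Finset.sum_add_distrib, Finset.sum_const, nsmul_eq_mul]
  have hFE : Fop k (Eop k φ) w = (T.card : ℂ) * φ w +
      ∑ j ∈ T, ∑ i ∈ F, glSgn w j * glSgn (Function.update w j false) i *
        φ (Function.update (Function.update w j false) i true) := by
    rw [Fop_apply, ← hT]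
    have hstep : ∀ j ∈ T, glSgn w j * Eop k φ (Function.update w j false)
        = φ w + ∑ i ∈ F, glSgn w j * glSgn (Function.update w j false) i *
            φ (Function.update (Function.update w j false) i true) := by
      intro j hj
      rw [hT, Finset.mem_filter] at hj
      rw [Eop_apply, filter_false_update_false w j hj.2, ← hF,
        Finset.sum_insert (by simp [hF, hj.2]), mul_add, Finset.mul_sum]
      congr 1
      · rw [Function.update_idem, glSgn_update_of_le w (le_refl j)]
        rw [show Function.update w j true = w by rw [← hj.2, Function.update_eq_self]]
        rw [← mul_assoc, glSgn_sq, one_mul]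
      · exact Finset.sum_congr rfl fun i _ => by ring
    rw [Finset.sum_congr rfl hstep, Finset.sum_add_distrib, Finset.sum_const, nsmul_eq_mul]
  have hcancel : (∑ i ∈ F, ∑ j ∈ T, glSgn w i * glSgn (Function.update w i true) j *
        φ (Function.update (Function.update w i true) j false)) +
      (∑ j ∈ T, ∑ i ∈ F, glSgn w j * glSgn (Function.update w j false) i *
        φ (Function.update (Function.update w j false) i true)) = 0 := by
    rw [Finset.sum_comm (s := T) (t := F)]
    rw [← Finset.sum_add_distrib]
    apply Finset.sum_eq_zero
    intro i hi
    rw [← Finset.sum_add_distrib]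
    apply Finset.sum_eq_zero
    intro j hj
    rw [hF, Finset.mem_filter] at hi
    rw [hT, Finset.mem_filter] at hj
    have hij : i ≠ j := by
      intro h; rw [h, hj.2] at hi; exact absurd hi.2 (by simp)
    have hword : Function.update (Function.update w i true) j false
        = Function.update (Function.update w j false) i true :=
      Function.update_comm hij _ _ _
    rcases lt_trichotomy i j with h | h | h
    · rw [glSgn_update_of_lt w h (by simp [hi.2]),
        glSgn_update_of_le w (le_of_lt h), hword]
      ring
    · exact absurd h hij
    · rw [glSgn_update_of_lt w h (by simp [hj.2]),
        glSgn_update_of_le w (le_of_lt h), hword]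
      ring
  have hTneg : T = Finset.univ.filter (fun i => ¬ (w i = false)) := by
    rw [hT]
    apply Finset.filter_congr
    intro i _
    cases w i <;> simp
  have hcard : (F.card : ℂ) + T.card = k := by
    norm_cast
    rw [hF, hTneg, Finset.card_filter_add_card_filter_not, Finset.card_univ,
      Fintype.card_fin]
  show Eop k (Fop k φ) w + Fop k (Eop k φ) w = (k : ℂ) • φ w
  rw [hEF, hFE]
  have : ((F.card : ℂ) * φ w + (T.card : ℂ) * φ w) = (k : ℂ) * φ w := by
    rw [← add_mul, hcard]
  calc _ = ((F.card : ℂ) * φ w + (T.card : ℂ) * φ w) + ((∑ i ∈ F, ∑ j ∈ T, glSgn w i * glSgn (Function.update w i true) j *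
        φ (Function.update (Function.update w i true) j false)) +
      (∑ j ∈ T, ∑ i ∈ F, glSgn w j * glSgn (Function.update w j false) i *
        φ (Function.update (Function.update w j false) i true))) := by ring
    _ = (k : ℂ) • φ w := by rw [hcancel, this, add_zero, smul_eq_mul]

lemma H1_E {k : ℕ} (φ : TensorV k) :
    H1op k (Eop k φ) = Eop k (H1op k φ) + Eop k φ := by
  funext w
  show H1op k (Eop k φ) w = Eop k (H1op k φ) w + Eop k φ w
  simp only [H1op_apply, Eop_apply]
  rw [Finset.mul_sum, ← Finset.sum_add_distrib]
  apply Finset.sum_congr rfl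
  intro i hi
  rw [Finset.mem_filter] at hi
  rw [filter_false_update_true,
    Finset.card_erase_of_mem (by simp [hi.2])]
  have hpos : 0 < (Finset.univ.filter (fun j => w j = false)).card :=
    Finset.card_pos.2 ⟨i, by simp [hi.2]⟩
  have : ((Finset.univ.filter (fun j => w j = false)).card - 1 + 1 : ℕ)
      = (Finset.univ.filter (fun j => w j = false)).card := Nat.succ_pred_eq_of_pos hpos
  have hcast : (((Finset.univ.filter (fun j => w j = false)).card - 1 : ℕ) : ℂ)
      = ((Finset.univ.filter (fun j => w j = false)).card : ℂ) - 1 := by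
    rw [Nat.cast_sub hpos]
    norm_num
  rw [hcast]
  ring

lemma H1_F {k : ℕ} (φ : TensorV k) :
    H1op k (Fop k φ) + Fop k φ = Fop k (H1op k φ) := by
  funext w
  show H1op k (Fop k φ) w + Fop k φ w = Fop k (H1op k φ) w
  simp only [H1op_apply, Fop_apply]
  rw [Finset.mul_sum, ← Finset.sum_add_distrib]
  apply Finset.sum_congr rfl
  intro i hi
  rw [Finset.mem_filter] at hi
  rw [filter_false_update_false w i hi.2,
    Finset.card_insert_of_notMem (by simp [hi.2])]
  push_cast
  ring

lemma card_false_wordOf {n : ℕ} (s : Finset (Fin n)) :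
    (Finset.univ.filter (fun i => wordOf s i = false)).card = s.card := by
  have himg : Finset.univ.filter (fun i => wordOf s i = false) = s.image Fin.succ := by
    ext i
    induction i using Fin.cases with
    | zero =>
        simp only [Finset.mem_filter, Finset.mem_univ, true_and, wordOf, Fin.cons_zero,
          Finset.mem_image]
        constructor
        · intro h; exact absurd h (by simp)
        · rintro ⟨j, -, hj⟩; exact absurd hj (Fin.succ_ne_zero j)
    | succ j =>
        simp only [Finset.mem_filter, Finset.mem_univ, true_and, Finset.mem_image, wordOf,
          Fin.cons_succ]
        constructor
        · intro h
          by_cases hj : j ∈ s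
          · exact ⟨j, hj, rfl⟩
          · simp [hj] at h
        · rintro ⟨j', hj', hjj⟩
          have : j' = j := Fin.succ_injective _ hjj
          subst this
          simp [hj']
  rw [himg, Finset.card_image_of_injective _ (Fin.succ_injective _)]

lemma Eop_vStd {n : ℕ} (s : Finset (Fin n)) : Eop (n+1) (vStd s) = 0 := by
  unfold vStd; exact Eop_Eop _

lemma H1_bv {k : ℕ} (w0 : Fin k → Bool) :
    H1op k (bv w0) = ((Finset.univ.filter (fun i => w0 i = false)).card : ℂ) • bv w0 := by
  funext w
  show H1op k (bv w0) w = _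
  rw [H1op_apply]
  rw [Pi.smul_apply]
  by_cases h : w = w0
  · subst h
    show _ * bv w w = _ • bv w w
    rw [smul_eq_mul]
  · show _ * bv w0 w = _ • bv w0 w
    rw [smul_eq_mul, show bv w0 w = 0 from if_neg h]
    ring

lemma H1_vStd {n : ℕ} (s : Finset (Fin n)) :
    H1op (n+1) (vStd s) = ((s.card : ℂ) + 1) • vStd s := by
  unfold vStd
  rw [H1_E, H1_bv, card_false_wordOf, map_smul]
  module

lemma H1_F_vStd {n : ℕ} (s : Finset (Fin n)) :
    H1op (n+1) (Fop (n+1) (vStd s)) = (s.card : ℂ) • Fop (n+1) (vStd s) := by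
  have h1 := H1_F (vStd s)
  have h2 : Fop (n+1) (H1op (n+1) (vStd s)) = ((s.card : ℂ) + 1) • Fop (n+1) (vStd s) := by
    rw [H1_vStd, map_smul]
  have h4 := h1.trans h2
  have h5 : H1op (n+1) (Fop (n+1) (vStd s))
      = ((s.card : ℂ) + 1) • Fop (n+1) (vStd s) - Fop (n+1) (vStd s) :=
    eq_sub_of_add_eq h4
  rw [h5]
  module

lemma EF_vStd {n : ℕ} (s : Finset (Fin n)) :
    Eop (n+1) (Fop (n+1) (vStd s)) = ((n+1 : ℕ) : ℂ) • vStd s := by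
  have := congrFun (EF_FE (k := n+1) (vStd s))
  have h := EF_FE (k := n+1) (vStd s)
  rw [Eop_vStd, map_zero, add_zero] at h
  exact h

/-- recover the subset from a word -/
def sOf {n : ℕ} (w : Fin (n+1) → Bool) : Finset (Fin n) :=
  Finset.univ.filter (fun j => w j.succ = false)

lemma wordOf_sOf {n : ℕ} {w : Fin (n+1) → Bool} (h : w 0 = true) :
    wordOf (sOf w) = w := by
  funext i
  induction i using Fin.cases with
  | zero => simp [wordOf, h]
  | succ j =>
      simp only [wordOf, Fin.cons_succ, sOf, Finset.mem_filter, Finset.mem_univ, true_and]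
      cases hj : w j.succ <;> simp [hj]

lemma update_wordOf_sOf {n : ℕ} {w : Fin (n+1) → Bool} (h : w 0 = false) :
    Function.update (wordOf (sOf w)) 0 false = w := by
  funext i
  induction i using Fin.cases with
  | zero => simp [h]
  | succ j =>
      rw [Function.update_of_ne (Fin.succ_ne_zero j)]
      simp only [wordOf, Fin.cons_succ, sOf, Finset.mem_filter, Finset.mem_univ, true_and]
      cases hj : w j.succ <;> simp [hj]

lemma sOf_wordOf {n : ℕ} (s : Finset (Fin n)) : sOf (wordOf s) = s := by
  ext j
  simp only [sOf, Finset.mem_filter, Finset.mem_univ, true_and, wordOf, Fin.cons_succ]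
  by_cases hj : j ∈ s <;> simp [hj]

lemma glSgn_zero {n : ℕ} (w : Fin (n+1) → Bool) : glSgn w 0 = 1 := by
  unfold glSgn
  rw [show (Finset.univ.filter (fun j => j < (0 : Fin (n+1)) ∧ w j = true)) = ∅ by
    ext j; simp [Fin.not_lt_zero]]
  simp

lemma vStd_apply_of_false {n : ℕ} (t : Finset (Fin n)) (w' : Fin (n+1) → Bool)
    (h : w' 0 = false) :
    vStd t w' = if w' = Function.update (wordOf t) 0 false then 1 else 0 := by
  show Eop (n+1) (bv (wordOf t)) w' = _
  rw [Eop_apply]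
  rw [Finset.sum_eq_single_of_mem (0 : Fin (n+1)) (by simp [h])]
  · rw [glSgn_zero, one_mul]
    show (if Function.update w' 0 true = wordOf t then (1:ℂ) else 0) = _
    apply if_congr _ rfl rfl
    constructor
    · intro hh
      rw [← hh, Function.update_idem]
      conv_rhs => rw [← h]
      rw [Function.update_eq_self]
    · intro hh
      rw [hh, Function.update_idem]
      have : wordOf t 0 = true := rfl
      conv_lhs => rw [show (true : Bool) = wordOf t 0 from this.symm]
      rw [Function.update_eq_self]
  · intro i hi hne
    have h0 : Function.update w' i true 0 = false := by
      rw [Function.update_of_ne (Ne.symm hne)]; exact h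
    have hne2 : Function.update w' i true ≠ wordOf t := by
      intro hh; rw [hh] at h0; simp [wordOf] at h0
    rw [show bv (wordOf t) (Function.update w' i true) = 0 from if_neg hne2, mul_zero]

lemma bv_decomp {n : ℕ} (w : Fin (n+1) → Bool) (hw : w 0 = false) :
    bv w = vStd (sOf w)
      - ∑ s : Finset (Fin n), vStd (sOf w) (wordOf s) • bv (wordOf s) := by
  funext w'
  show bv w w' = vStd (sOf w) w' - (∑ s : Finset (Fin n),
      vStd (sOf w) (wordOf s) • bv (wordOf s)) w'
  rw [Finset.sum_apply]
  cases hw' : w' 0 with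
  | false =>
      have hsum : (∑ s : Finset (Fin n), (vStd (sOf w) (wordOf s) • bv (wordOf s)) w') = 0 := by
        apply Finset.sum_eq_zero
        intro s _
        have : bv (wordOf s) w' = 0 := by
          apply if_neg
          intro hh
          rw [hh] at hw'
          simp [wordOf] at hw'
        rw [Pi.smul_apply, this, smul_zero]
      rw [hsum, sub_zero, vStd_apply_of_false _ _ hw', update_wordOf_sOf hw]
      rfl
  | true =>
      have hL : bv w w' = 0 := by
        apply if_neg
        intro hh
        rw [hh, hw] at hw'
        exact absurd hw' (by simp)
      have hsum : (∑ s : Finset (Fin n), (vStd (sOf w) (wordOf s) • bv (wordOf s)) w')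
          = vStd (sOf w) w' := by
        rw [Finset.sum_eq_single_of_mem (sOf w') (Finset.mem_univ _)]
        · rw [Pi.smul_apply, wordOf_sOf hw', show bv w' w' = 1 from if_pos rfl, smul_eq_mul,
            mul_one]
        · intro s _ hs
          have : bv (wordOf s) w' = 0 := by
            apply if_neg
            intro hh
            apply hs
            rw [hh, sOf_wordOf]
          rw [Pi.smul_apply, this, smul_zero]
      rw [hsum, hL]
      ring

lemma phi_decomp {k : ℕ} (φ : TensorV k) :
    φ = ∑ w : Fin k → Bool, φ w • bv w := by
  funext w'
  rw [Finset.sum_apply]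
  rw [Finset.sum_eq_single_of_mem w' (Finset.mem_univ _)]
  · rw [Pi.smul_apply, show bv w' w' = 1 from if_pos rfl, smul_eq_mul, mul_one]
  · intro w _ hw
    rw [Pi.smul_apply, show bv w w' = 0 from if_neg (Ne.symm hw), smul_zero]

lemma Eop_bv_mem {n : ℕ} (w : Fin (n+1) → Bool) :
    Eop (n+1) (bv w) ∈ Submodule.span ℂ (Set.range (vStd (n := n))) := by
  cases hw : w 0 with
  | true =>
      rw [← wordOf_sOf hw]
      exact Submodule.subset_span ⟨sOf w, rfl⟩
  | false =>
      rw [bv_decomp w hw, map_sub, map_sum]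
      apply Submodule.sub_mem
      · rw [show Eop (n+1) (vStd (sOf w)) = 0 from Eop_vStd _]
        exact Submodule.zero_mem _
      · apply Submodule.sum_mem
        intro s _
        rw [map_smul]
        exact Submodule.smul_mem _ _ (Submodule.subset_span ⟨s, rfl⟩)

lemma Eop_mem {n : ℕ} (φ : TensorV (n+1)) :
    Eop (n+1) φ ∈ Submodule.span ℂ (Set.range (vStd (n := n))) := by
  have : Eop (n+1) φ = ∑ w : Fin (n+1) → Bool, φ w • Eop (n+1) (bv w) := by
    conv_lhs => rw [phi_decomp φ]
    rw [map_sum]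
    exact Finset.sum_congr rfl fun w _ => map_smul _ _ _
  rw [this]
  exact Submodule.sum_mem _ fun w _ => Submodule.smul_mem _ _ (Eop_bv_mem w)

lemma span_vF_top {n : ℕ} :
    Submodule.span ℂ (Set.range (vStd (n := n))
      ∪ (Fop (n+1) '' Set.range (vStd (n := n)))) = ⊤ := by
  rw [eq_top_iff]
  rintro φ -
  have hne : ((n+1 : ℕ) : ℂ) ≠ 0 := Nat.cast_ne_zero.2 (Nat.succ_ne_zero n)
  have hid : φ = ((n+1 : ℕ) : ℂ)⁻¹ •
      (Eop (n+1) (Fop (n+1) φ) + Fop (n+1) (Eop (n+1) φ)) := by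
    rw [EF_FE, smul_smul, inv_mul_cancel₀ hne, one_smul]
  rw [hid]
  apply Submodule.smul_mem
  apply Submodule.add_mem
  · exact Submodule.span_mono Set.subset_union_left (Eop_mem _)
  · have h1 := Eop_mem (n := n) φ
    have h2 : Fop (n+1) (Eop (n+1) φ) ∈
        Submodule.map (Fop (n+1)) (Submodule.span ℂ (Set.range (vStd (n := n)))) :=
      Submodule.mem_map_of_mem h1
    rw [Submodule.map_span] at h2
    exact Submodule.span_mono Set.subset_union_right h2

lemma card_applySet {n : ℕ} (d : PlanarRook n) (s : Finset (Fin n)) (hs : s ⊆ d.dom) :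
    (d.applySet s).card = s.card := by
  unfold PlanarRook.applySet
  rw [Finset.card_image_of_injOn]
  · apply Finset.card_bij (fun a _ => a.1)
    · intro a ha
      rw [Finset.mem_filter] at ha
      exact ha.2
    · intro a ha b hb hab
      exact Subtype.ext hab
    · intro b hb
      refine ⟨⟨b, hs hb⟩, ?_, rfl⟩
      rw [Finset.mem_filter]
      exact ⟨Finset.mem_attach _ _, hb⟩
  · intro a _ b _ hab
    unfold PlanarRook.mapElem at hab
    have h1 := (d.ran.orderIsoOfFin d.hcard.symm).injective (Subtype.ext hab)
    have h2 := (d.dom.orderIsoOfFin rfl).symm.injective h1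
    exact Subtype.ext (congrArg Subtype.val h2)

lemma H1_H2 {k : ℕ} (φ : TensorV k) : H1op k φ + H2op k φ = (k : ℂ) • φ := by
  funext w
  show H1op k φ w + H2op k φ w = (k : ℂ) • φ w
  rw [H1op_apply, H2op_apply, ← add_mul, smul_eq_mul]
  congr 1
  have hTneg : Finset.univ.filter (fun i => w i = true)
      = Finset.univ.filter (fun i => ¬ (w i = false)) := by
    apply Finset.filter_congr
    intro i _
    cases w i <;> simp
  norm_cast
  rw [hTneg, Finset.card_filter_add_card_filter_not, Finset.card_univ, Fintype.card_fin]


/-- The action of a planar rook diagram `d ∈ P_{k-1}` on `V^{⊗k}` (`k = n+1`),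
defined on the basis `{v_s, f·v_s}` by `d·v_s = v_{d(s)}` and `d·(f v_s) = f v_{d(s)}`
when `s ⊆ dom d` (and `0` otherwise), commutes with the `gl(1|1)`-action:
any linear map `D` satisfying these formulas commutes with `e, f, h₁, h₂`. -/
theorem rook_action_commutes (n : ℕ) (d : PlanarRook n)
    (D : TensorV (n + 1) →ₗ[ℂ] TensorV (n + 1))
    (hD1 : ∀ s : Finset (Fin n),
      D (vStd s) = if s ⊆ d.dom then vStd (d.applySet s) else 0)
    (hD2 : ∀ s : Finset (Fin n),
      D (Fop (n + 1) (vStd s)) =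
        if s ⊆ d.dom then Fop (n + 1) (vStd (d.applySet s)) else 0) :
    D ∘ₗ Eop (n + 1) = Eop (n + 1) ∘ₗ D ∧
    D ∘ₗ Fop (n + 1) = Fop (n + 1) ∘ₗ D ∧
    D ∘ₗ H1op (n + 1) = H1op (n + 1) ∘ₗ D ∧
    D ∘ₗ H2op (n + 1) = H2op (n + 1) ∘ₗ D := by
  
  have hspan := span_vF_top (n := n)
  have hcase : ∀ (A B : TensorV (n+1) →ₗ[ℂ] TensorV (n+1)),
      (∀ s : Finset (Fin n), A (vStd s) = B (vStd s)) →
      (∀ s : Finset (Fin n), A (Fop (n+1) (vStd s)) = B (Fop (n+1) (vStd s))) →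
      A = B := by
    intro A B h1 h2
    apply LinearMap.ext_on hspan
    rintro x (⟨s, rfl⟩ | ⟨y, ⟨s, rfl⟩, rfl⟩)
    · exact h1 s
    · exact h2 s
  have hE : D ∘ₗ Eop (n + 1) = Eop (n + 1) ∘ₗ D := by
    apply hcase
    · intro s
      simp only [LinearMap.comp_apply]
      rw [Eop_vStd, map_zero, hD1]
      split_ifs with h
      · rw [Eop_vStd]
      · rw [map_zero]
    · intro s
      simp only [LinearMap.comp_apply]
      rw [EF_vStd, map_smul, hD1, hD2]
      split_ifs with h
      · rw [EF_vStd]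
      · rw [map_zero, smul_zero]
  have hF : D ∘ₗ Fop (n + 1) = Fop (n + 1) ∘ₗ D := by
    apply hcase
    · intro s
      simp only [LinearMap.comp_apply]
      rw [hD2, hD1]
      split_ifs with h
      · rfl
      · rw [map_zero]
    · intro s
      simp only [LinearMap.comp_apply]
      rw [show Fop (n+1) (Fop (n+1) (vStd s)) = 0 from Fop_Fop _, map_zero, hD2]
      split_ifs with h
      · rw [show Fop (n+1) (Fop (n+1) (vStd (d.applySet s))) = 0 from Fop_Fop _]
      · rw [map_zero]
  have hH1 : D ∘ₗ H1op (n + 1) = H1op (n + 1) ∘ₗ D := by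
    apply hcase
    · intro s
      simp only [LinearMap.comp_apply]
      rw [H1_vStd, map_smul, hD1]
      split_ifs with h
      · rw [H1_vStd, card_applySet d s h]
      · rw [map_zero, smul_zero]
    · intro s
      simp only [LinearMap.comp_apply]
      rw [H1_F_vStd, map_smul, hD2]
      split_ifs with h
      · rw [H1_F_vStd, card_applySet d s h]
      · rw [map_zero, smul_zero]
  have hH2 : D ∘ₗ H2op (n + 1) = H2op (n + 1) ∘ₗ D := by
    apply LinearMap.ext
    intro φ
    simp only [LinearMap.comp_apply]
    have e : ∀ ψ : TensorV (n+1), H2op (n+1) ψ = ((n+1 : ℕ) : ℂ) • ψ - H1op (n+1) ψ := by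
      intro ψ
      have := H1_H2 (k := n+1) ψ
      have h' : H2op (n+1) ψ + H1op (n+1) ψ = ((n+1 : ℕ) : ℂ) • ψ :=
        (add_comm _ _).trans this
      exact eq_sub_of_add_eq h'
    have hc := LinearMap.congr_fun hH1 φ
    simp only [LinearMap.comp_apply] at hc
    rw [e φ, map_sub, map_smul, e (D φ), hc]
  exact ⟨hE, hF, hH1, hH2⟩
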